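/- arXiv:2410.17086 — 4 statements merged into one kernel-verified Lean document; each statement's English description precedes it below -/
import Mathlib

section
/- Hidden Persuasion is BIC: let S be a signal with finite range, μ₁, μ₂ ∈ [0,1] random with E[μ₁] ≥ E[μ₂], and G := E[μ₂ − μ₁ | S]. Let the recommendation R be defined by: with probability ε (independently of everything), R = π(S) for an arbitrary (possibly random, S-measurable) target π : range(S) → {1,2}; otherwise R = 2 if G > 0 and R = 1 if G ≤ 0. If 0 < ε < (1/3)·E[G·1{G>0}], then E[μ₂ − μ₁ | R = 2] > 0 and E[μ₁ − μ₂ | R = 1] ≥ 0. -/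
open scoped Classical

noncomputable def pr {Ω : Type*} [Fintype Ω] (w : Ω → ℝ) (A : Ω → Prop) : ℝ :=
  ∑ ω, if A ω then w ω else 0

noncomputable def ev {Ω : Type*} [Fintype Ω] (w : Ω → ℝ) (X : Ω → ℝ) : ℝ :=
  ∑ ω, w ω * X ω

noncomputable def cexp {Ω : Type*} [Fintype Ω] (w : Ω → ℝ) (X : Ω → ℝ) (A : Ω → Prop) : ℝ :=
  (∑ ω, if A ω then w ω * X ω else 0) / pr w A

noncomputable def cexpRV {Ω : Type*} [Fintype Ω] {α : Type*} (w : Ω → ℝ) (X : Ω → ℝ)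
    (Y : Ω → α) : Ω → ℝ :=
  fun ω => cexp w X (fun ω' => Y ω' = Y ω)

section AuxBIC
variable {Ω : Type*} [Fintype Ω]

lemma pr_nonneg' (w : Ω → ℝ) (hw0 : ∀ ω, 0 ≤ w ω) (A : Ω → Prop) : 0 ≤ pr w A :=
  Finset.sum_nonneg fun ω _ => by by_cases hA : A ω <;> simp [hA, hw0 ω]

lemma pr_eq_zero_imp' (w : Ω → ℝ) (hw0 : ∀ ω, 0 ≤ w ω) (A : Ω → Prop)
    (h : pr w A = 0) : ∀ ω, A ω → w ω = 0 := by
  intro ω hA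
  have h2 := (Finset.sum_eq_zero_iff_of_nonneg (s := Finset.univ)
    (f := fun ω => if A ω then w ω else 0)
    (fun ω _ => by by_cases hA' : A ω <;> simp [hA', hw0 ω])).mp h ω (Finset.mem_univ ω)
  simpa [hA] using h2

lemma indep_transfer' {α : Type*} (w : Ω → ℝ)
    (S : Ω → α) (μ1 μ2 : Ω → ℝ) (C : Ω → Bool)
    (hindep : ∀ (s : α) (x y : ℝ) (bo : Bool),
      pr w (fun ω => S ω = s ∧ μ1 ω = x ∧ μ2 ω = y ∧ C ω = bo)
        = pr w (fun ω => S ω = s ∧ μ1 ω = x ∧ μ2 ω = y) * pr w (fun ω => C ω = bo))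
    (F : α → ℝ → ℝ → ℝ) (bo : Bool) :
    ∑ ω, (if C ω = bo then w ω * F (S ω) (μ1 ω) (μ2 ω) else 0)
      = (∑ ω, w ω * F (S ω) (μ1 ω) (μ2 ω)) * pr w (fun ω => C ω = bo) := by
  classical
  set T : Ω → α × ℝ × ℝ := fun ω => (S ω, μ1 ω, μ2 ω) with hT
  have hmaps : ∀ ω ∈ (Finset.univ : Finset Ω), T ω ∈ Finset.univ.image T :=
    fun ω _ => Finset.mem_image_of_mem T (Finset.mem_univ ω)
  rw [← Finset.sum_fiberwise_of_maps_to hmaps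
    (fun ω => if C ω = bo then w ω * F (S ω) (μ1 ω) (μ2 ω) else 0),
    ← Finset.sum_fiberwise_of_maps_to hmaps
    (fun ω => w ω * F (S ω) (μ1 ω) (μ2 ω)), Finset.sum_mul]
  refine Finset.sum_congr rfl ?_
  rintro ⟨s, x, y⟩ _
  have hfib : Finset.univ.filter (fun ω => T ω = (s, x, y))
      = Finset.univ.filter (fun ω => S ω = s ∧ μ1 ω = x ∧ μ2 ω = y) := by
    apply Finset.filter_congr; intro ω _; simp [hT, Prod.ext_iff]
  rw [hfib]
  have key1 : ∑ ω ∈ Finset.univ.filter (fun ω => S ω = s ∧ μ1 ω = x ∧ μ2 ω = y),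
      (if C ω = bo then w ω * F (S ω) (μ1 ω) (μ2 ω) else 0)
      = F s x y * pr w (fun ω => S ω = s ∧ μ1 ω = x ∧ μ2 ω = y ∧ C ω = bo) := by
    rw [Finset.sum_filter, pr, Finset.mul_sum]
    refine Finset.sum_congr rfl fun ω _ => ?_
    by_cases h : S ω = s ∧ μ1 ω = x ∧ μ2 ω = y <;> by_cases hc : C ω = bo <;>
      simp [h, hc, mul_comm]
  have key2 : ∑ ω ∈ Finset.univ.filter (fun ω => S ω = s ∧ μ1 ω = x ∧ μ2 ω = y),
      (w ω * F (S ω) (μ1 ω) (μ2 ω))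
      = F s x y * pr w (fun ω => S ω = s ∧ μ1 ω = x ∧ μ2 ω = y) := by
    rw [Finset.sum_filter, pr, Finset.mul_sum]
    refine Finset.sum_congr rfl fun ω _ => ?_
    by_cases h : S ω = s ∧ μ1 ω = x ∧ μ2 ω = y <;> simp [h, mul_comm]
  rw [key1, key2, hindep]; ring

end AuxBIC

/-- Hidden Persuasion is BIC: with posterior gap `G = E[μ₂ − μ₁ | S]`, a coin `C` of bias
`ε` independent of `(S, μ₁, μ₂)`, recommendation `R = π(S)` on the persuasion branch and
`R = 2` iff `G > 0` on the exploitation branch, and `0 < ε < (1/3)·E[G·1{G>0}]`, the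
agent weakly prefers the recommended arm: `E[μ₂ − μ₁ | R = 2] > 0` and
`E[μ₁ − μ₂ | R = 1] ≥ 0`. -/
theorem stmt7 {Ω α : Type*} [Fintype Ω] [Fintype α]
    (w : Ω → ℝ) (hw0 : ∀ ω, 0 ≤ w ω) (hw1 : ∑ ω, w ω = 1)
    (S : Ω → α) (μ1 μ2 : Ω → ℝ)
    (h1 : ∀ ω, μ1 ω ∈ Set.Icc (0:ℝ) 1) (h2 : ∀ ω, μ2 ω ∈ Set.Icc (0:ℝ) 1)
    (hmeans : ev w μ2 ≤ ev w μ1)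
    (C : Ω → Bool) (ε : ℝ)
    (hC : pr w (fun ω => C ω = true) = ε)
    (hindep : ∀ (s : α) (x y : ℝ) (bo : Bool),
      pr w (fun ω => S ω = s ∧ μ1 ω = x ∧ μ2 ω = y ∧ C ω = bo)
        = pr w (fun ω => S ω = s ∧ μ1 ω = x ∧ μ2 ω = y) * pr w (fun ω => C ω = bo))
    (π : α → ℕ) (hπ : ∀ s, π s = 1 ∨ π s = 2)
    (G : Ω → ℝ) (hG : G = cexpRV w (fun ω => μ2 ω - μ1 ω) S)
    (R : Ω → ℕ)
    (hR : ∀ ω, R ω = if C ω then π (S ω) else (if 0 < G ω then 2 else 1))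
    (hε0 : 0 < ε)
    (hε : ε < (1/3) * ev w (fun ω => if 0 < G ω then G ω else 0)) :
    0 < cexp w (fun ω => μ2 ω - μ1 ω) (fun ω => R ω = 2) ∧
      0 ≤ cexp w (fun ω => μ1 ω - μ2 ω) (fun ω => R ω = 1) := by
  classical
  set g' : α → ℝ := fun s => cexp w (fun ω => μ2 ω - μ1 ω) (fun ω => S ω = s) with hg'
  have hGS : ∀ ω, G ω = g' (S ω) := fun ω => by rw [hG]; rfl
  have hD1 : ∀ ω, μ2 ω - μ1 ω ≤ 1 := fun ω => by
    have := (h1 ω).1; have := (h2 ω).2; linarith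
  have hDm1 : ∀ ω, -1 ≤ μ2 ω - μ1 ω := fun ω => by
    have := (h1 ω).2; have := (h2 ω).1; linarith
  -- fiber identity
  have hfiber : ∀ s : α, (∑ ω, if S ω = s then w ω * (μ2 ω - μ1 ω) else 0)
      = g' s * pr w (fun ω => S ω = s) := by
    intro s
    by_cases hps : pr w (fun ω => S ω = s) = 0
    · rw [hps, mul_zero]
      refine Finset.sum_eq_zero fun ω _ => ?_
      by_cases h : S ω = s
      · simp [h, pr_eq_zero_imp' w hw0 _ hps ω h]
      · simp [h]
    · rw [hg']
      simp only [cexp]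
      rw [div_mul_cancel₀ _ hps]
  -- w ω ≤ pr (S = S ω)
  have hprS_ge : ∀ ω, w ω ≤ pr w (fun ω' => S ω' = S ω) := by
    intro ω
    have := Finset.single_le_sum (f := fun ω' => if S ω' = S ω then w ω' else 0)
      (fun ω' _ => by by_cases h : S ω' = S ω <;> simp [h, hw0 ω']) (Finset.mem_univ ω)
    simpa [pr] using this
  -- G ≤ 1 where w > 0
  have hG1 : ∀ ω, 0 < w ω → G ω ≤ 1 := by
    intro ω hwω
    have hP : 0 < pr w (fun ω' => S ω' = S ω) := lt_of_lt_of_le hwω (hprS_ge ω)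
    rw [hG]
    show cexp w (fun ω => μ2 ω - μ1 ω) (fun ω' => S ω' = S ω) ≤ 1
    rw [cexp, div_le_one hP, pr]
    refine Finset.sum_le_sum fun ω' _ => ?_
    by_cases h : S ω' = S ω <;> simp [h]
    exact mul_le_of_le_one_right (hw0 ω') (hD1 ω')
  set g : ℝ := ev w (fun ω => if 0 < G ω then G ω else 0) with hgdef
  have hg1 : g ≤ 1 := by
    rw [hgdef, ev, ← hw1]
    refine Finset.sum_le_sum fun ω _ => ?_
    rcases eq_or_lt_of_le (hw0 ω) with h0 | h0
    · rw [← h0]; simp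
    · have hterm : (if 0 < G ω then G ω else 0) ≤ 1 := by
        split
        · exact hG1 ω h0
        · norm_num
      nlinarith
  have h3ε : 3 * ε < g := by linarith
  have hgpos : 0 < g := by linarith
  -- tower property
  have tower : (∑ ω, w ω * (if 0 < g' (S ω) then μ2 ω - μ1 ω else 0)) = g := by
    have hLfib : ∀ s : α, (∑ ω ∈ Finset.univ.filter (fun ω => S ω = s),
        w ω * (if 0 < g' (S ω) then μ2 ω - μ1 ω else 0))
        = if 0 < g' s then g' s * pr w (fun ω => S ω = s) else 0 := by
      intro s
      by_cases h : 0 < g' s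
      · rw [if_pos h, ← hfiber s, Finset.sum_filter]
        refine Finset.sum_congr rfl fun ω _ => ?_
        by_cases hs : S ω = s <;> simp [hs, h]
      · rw [if_neg h]
        refine Finset.sum_eq_zero fun ω hω => ?_
        simp only [Finset.mem_filter] at hω
        simp [hω.2, h]
    have hRfib : ∀ s : α, (∑ ω ∈ Finset.univ.filter (fun ω => S ω = s),
        w ω * (if 0 < g' (S ω) then g' (S ω) else 0))
        = if 0 < g' s then g' s * pr w (fun ω => S ω = s) else 0 := by
      intro s
      by_cases h : 0 < g' s
      · rw [if_pos h, pr, Finset.mul_sum, Finset.sum_filter]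
        refine Finset.sum_congr rfl fun ω _ => ?_
        by_cases hs : S ω = s <;> simp [hs, h, mul_comm]
      · rw [if_neg h]
        refine Finset.sum_eq_zero fun ω hω => ?_
        simp only [Finset.mem_filter] at hω
        simp [hω.2, h]
    have e1 : (∑ ω, w ω * (if 0 < g' (S ω) then μ2 ω - μ1 ω else 0))
        = ∑ s : α, ∑ ω ∈ Finset.univ.filter (fun ω => S ω = s),
            w ω * (if 0 < g' (S ω) then μ2 ω - μ1 ω else 0) :=
      (Finset.sum_fiberwise Finset.univ S _).symm
    have e2 : (∑ ω, w ω * (if 0 < g' (S ω) then g' (S ω) else 0))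
        = ∑ s : α, ∑ ω ∈ Finset.univ.filter (fun ω => S ω = s),
            w ω * (if 0 < g' (S ω) then g' (S ω) else 0) :=
      (Finset.sum_fiberwise Finset.univ S _).symm
    have e3 : g = ∑ ω, w ω * (if 0 < g' (S ω) then g' (S ω) else 0) := by
      rw [hgdef, ev]
      exact Finset.sum_congr rfl fun ω _ => by rw [hGS ω]
    rw [e1, e3, e2]
    exact Finset.sum_congr rfl fun s _ => by rw [hLfib s, hRfib s]
  -- pr C false
  have hCsum : pr w (fun ω => C ω = true) + pr w (fun ω => C ω = false) = 1 := by
    rw [pr, pr, ← Finset.sum_add_distrib, ← hw1]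
    refine Finset.sum_congr rfl fun ω _ => ?_
    cases hc : C ω <;> simp [hc]
  have hCf : pr w (fun ω => C ω = false) = 1 - ε := by
    rw [hC] at hCsum; linarith
  -- split of N2 by coin
  have h_split : (∑ ω, if R ω = 2 then w ω * (μ2 ω - μ1 ω) else 0)
      = (∑ ω, if C ω = true ∧ R ω = 2 then w ω * (μ2 ω - μ1 ω) else 0)
      + (∑ ω, if C ω = false then w ω * (if 0 < g' (S ω) then μ2 ω - μ1 ω else 0) else 0) := by
    rw [← Finset.sum_add_distrib]
    refine Finset.sum_congr rfl fun ω _ => ?_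
    cases hc : C ω
    · have hRω : R ω = if 0 < G ω then 2 else 1 := by rw [hR ω, hc]; simp
      by_cases hg : 0 < G ω
      · have hr2 : R ω = 2 := by rw [hRω, if_pos hg]
        rw [hGS ω] at hg
        simp [hr2, hc, hg]
      · have hr2 : R ω ≠ 2 := by rw [hRω, if_neg hg]; norm_num
        rw [hGS ω] at hg
        simp [hr2, hc, hg]
    · by_cases hr : R ω = 2 <;> simp [hc, hr]
  -- piece 1 bound
  have h_piece1 : -ε ≤ ∑ ω, if C ω = true ∧ R ω = 2 then w ω * (μ2 ω - μ1 ω) else 0 := by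
    have hterm : ∀ ω, -(if C ω = true then w ω else 0)
        ≤ (if C ω = true ∧ R ω = 2 then w ω * (μ2 ω - μ1 ω) else 0) := by
      intro ω
      by_cases hc : C ω = true <;> by_cases hr : R ω = 2 <;> simp [hc, hr]
      · nlinarith [hw0 ω, hDm1 ω]
      · exact hw0 ω
    have := Finset.sum_le_sum (s := Finset.univ) fun ω _ => hterm ω
    have hneg : (∑ ω, -(if C ω = true then w ω else 0))
        = -pr w (fun ω => C ω = true) := by
      rw [pr, ← Finset.sum_neg_distrib]
      exact Finset.sum_congr rfl fun ω _ => by by_cases hc : C ω = true <;> simp [hc]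
    rw [hneg, hC] at this
    exact this
  -- piece 2 via independence and tower
  have h_piece2 : (∑ ω, if C ω = false then w ω * (if 0 < g' (S ω) then μ2 ω - μ1 ω else 0) else 0)
      = g * (1 - ε) := by
    have h := indep_transfer' w S μ1 μ2 C hindep
      (fun s x y => if 0 < g' s then y - x else 0) false
    beta_reduce at h
    rw [hCf] at h
    rw [h, tower]
  have hN2pos : 0 < ∑ ω, if R ω = 2 then w ω * (μ2 ω - μ1 ω) else 0 := by
    have haux : 0 ≤ ε * (1 - g) := mul_nonneg hε0.le (by linarith)
    rw [h_split]
    nlinarith [h_piece1, h_piece2, h3ε, hε0]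
  have hP2 : (∑ ω, if R ω = 2 then w ω * (μ2 ω - μ1 ω) else 0)
      ≤ pr w (fun ω => R ω = 2) := by
    rw [pr]
    refine Finset.sum_le_sum fun ω _ => ?_
    by_cases hr : R ω = 2 <;> simp [hr]
    exact mul_le_of_le_one_right (hw0 ω) (hD1 ω)
  have hP2pos : 0 < pr w (fun ω => R ω = 2) := lt_of_lt_of_le hN2pos hP2
  -- goal 2 ingredients
  have hEvD : ∑ ω, w ω * (μ2 ω - μ1 ω) ≤ 0 := by
    have he : ∑ ω, w ω * (μ2 ω - μ1 ω) = ev w μ2 - ev w μ1 := by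
      rw [ev, ev, ← Finset.sum_sub_distrib]
      exact Finset.sum_congr rfl fun ω _ => by ring
    linarith
  have hRval : ∀ ω, R ω = 1 ∨ R ω = 2 := by
    intro ω
    rw [hR ω]
    cases hc : C ω <;> simp [hc]
    · exact le_or_gt (G ω) 0
    · exact hπ (S ω)
  have h_split1 : (∑ ω, if R ω = 1 then w ω * (μ2 ω - μ1 ω) else 0)
      + (∑ ω, if R ω = 2 then w ω * (μ2 ω - μ1 ω) else 0)
      = ∑ ω, w ω * (μ2 ω - μ1 ω) := by
    rw [← Finset.sum_add_distrib]
    refine Finset.sum_congr rfl fun ω _ => ?_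
    rcases hRval ω with h | h <;> simp [h]
  have hN1 : 0 ≤ ∑ ω, if R ω = 1 then w ω * (μ1 ω - μ2 ω) else 0 := by
    have he : (∑ ω, if R ω = 1 then w ω * (μ1 ω - μ2 ω) else 0)
        = -(∑ ω, if R ω = 1 then w ω * (μ2 ω - μ1 ω) else 0) := by
      rw [← Finset.sum_neg_distrib]
      refine Finset.sum_congr rfl fun ω _ => ?_
      by_cases h : R ω = 1 <;> simp [h]
      ring
    rw [he]
    linarith
  constructor
  · rw [cexp]
    apply div_pos ?_ hP2pos
    calc (0:ℝ) < ∑ ω, if R ω = 2 then w ω * (μ2 ω - μ1 ω) else 0 := hN2pos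
      _ = _ := Finset.sum_congr rfl fun ω _ => by by_cases hr : R ω = 2 <;> simp [hr]
  · rw [cexp]
    apply div_nonneg ?_ (pr_nonneg' w hw0 _)
    calc (0:ℝ) ≤ ∑ ω, if R ω = 1 then w ω * (μ1 ω - μ2 ω) else 0 := hN1
      _ = _ := Finset.sum_congr rfl fun ω _ => by by_cases hr : R ω = 1 <;> simp [hr]
end

section
/- Failure of the greedy algorithm: consider a two-armed Bayesian bandit where Z_t := E[μ₁ − μ₂ | H_t] is the Doob martingale of μ₁ − μ₂ ∈ [−1,1] with respect to the history filtration, and the greedy algorithm chooses arm 2 in round t iff Z_t < 0. Let τ be the first round the greedy algorithm chooses arm 2 (τ = T+1 if never). Then Pr[τ > T] ≥ E[μ₁] − E[μ₂]. -/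
open MeasureTheory

/-- Failure of the greedy algorithm: if `Z_t = E[μ₁ − μ₂ | H_t]` is the Doob martingale
of `μ₁ − μ₂` w.r.t. the history filtration, `Z_1 ≡ E[μ₁] − E[μ₂]`, and `τ` is the first
round `t ∈ [1,T]` with `Z_t < 0` (i.e. the first round greedy chooses arm 2), with
`τ = T+1` if this never happens, then `Pr[τ > T] ≥ E[μ₁] − E[μ₂]`. -/
theorem stmt11 {Ω : Type*} {m0 : MeasurableSpace Ω} {μP : Measure Ω}
    [IsProbabilityMeasure μP] {ℱ : Filtration ℕ m0}
    (μ1 μ2 : Ω → ℝ) (Z : ℕ → Ω → ℝ) (T : ℕ)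
    (h1 : ∀ ω, μ1 ω ∈ Set.Icc (0:ℝ) 1) (h2 : ∀ ω, μ2 ω ∈ Set.Icc (0:ℝ) 1)
    (hmart : Martingale Z ℱ μP)
    (hDoob : ∀ t, Z t =ᵐ[μP] μP[fun ω => μ1 ω - μ2 ω | ℱ t])
    (hbound : ∀ t ω, |Z t ω| ≤ 1)
    (hZ1 : ∀ ω, Z 1 ω = (∫ ω', μ1 ω' ∂μP) - ∫ ω', μ2 ω' ∂μP)
    (τ : Ω → ℕ)
    (hτdef : ∀ ω, τ ω = sInf ({t | 1 ≤ t ∧ t ≤ T ∧ Z t ω < 0} ∪ {T + 1}))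
    (hτ : IsStoppingTime ℱ (fun ω => (τ ω : WithTop ℕ))) :
    (∫ ω, μ1 ω ∂μP) - (∫ ω, μ2 ω ∂μP) ≤ (μP {ω | T < τ ω}).toReal := by
  classical
  -- basic facts about τ
  have hτmem : ∀ ω, τ ω ∈ ({t | 1 ≤ t ∧ t ≤ T ∧ Z t ω < 0} ∪ {T + 1} : Set ℕ) := by
    intro ω
    rw [hτdef ω]
    exact Nat.sInf_mem ⟨T + 1, Or.inr rfl⟩
  have hτle : ∀ ω, τ ω ≤ T + 1 := by
    intro ω
    rw [hτdef ω]
    exact Nat.sInf_le (Or.inr rfl)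
  have hτge : ∀ ω, 1 ≤ τ ω := by
    intro ω
    rcases hτmem ω with h | h
    · exact h.1
    · simp only [Set.mem_singleton_iff] at h; omega
  -- constant stopping time 1
  have hσ : IsStoppingTime ℱ (fun _ : Ω => (1 : ℕ)) := isStoppingTime_const ℱ 1
  have hle : (fun _ : Ω => ((1 : ℕ) : WithTop ℕ)) ≤ (fun ω => (τ ω : WithTop ℕ)) :=
    fun ω => WithTop.coe_le_coe.mpr (hτge ω)
  have hsf : SigmaFinite (μP.trim hσ.measurableSpace_le) := by
    have : IsFiniteMeasure (μP.trim hσ.measurableSpace_le) :=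
      isFiniteMeasure_trim _
    infer_instance
  have hsamp : MeasureTheory.stoppedValue Z (fun _ : Ω => (1 : ℕ)) =ᵐ[μP]
      μP[MeasureTheory.stoppedValue Z (fun ω => (τ ω : WithTop ℕ)) | hσ.measurableSpace] :=
    hmart.stoppedValue_ae_eq_condExp_of_le (n := T + 1) hτ hσ hle
      (fun ω => WithTop.coe_le_coe.mpr (hτle ω))
  have hint : Integrable (MeasureTheory.stoppedValue Z (fun ω => (τ ω : WithTop ℕ))) μP :=
    MeasureTheory.integrable_stoppedValue ℕ hτ (fun n => hmart.integrable n)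
      (N := T + 1) (fun ω => WithTop.coe_le_coe.mpr (hτle ω))
  -- integral of stopped value equals c
  have hc : (∫ ω, μ1 ω ∂μP) - (∫ ω, μ2 ω ∂μP)
      = ∫ ω, MeasureTheory.stoppedValue Z (fun ω => (τ ω : WithTop ℕ)) ω ∂μP := by
    have h1' : ∫ ω, MeasureTheory.stoppedValue Z (fun _ : Ω => (1 : ℕ)) ω ∂μP
        = ∫ ω, MeasureTheory.stoppedValue Z (fun ω => (τ ω : WithTop ℕ)) ω ∂μP := by
      rw [integral_congr_ae hsamp, integral_condExp hσ.measurableSpace_le]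
    have h2' : ∫ ω, MeasureTheory.stoppedValue Z (fun _ : Ω => (1 : ℕ)) ω ∂μP
        = (∫ ω, μ1 ω ∂μP) - (∫ ω, μ2 ω ∂μP) := by
      show ∫ ω, Z 1 ω ∂μP = _
      simp only [MeasureTheory.stoppedValue, hZ1]
      rw [integral_const]
      simp
    rw [← h1', h2']
  -- the set {T < τ} is measurable
  have hmeas : MeasurableSet {ω | T < τ ω} := by
    have : MeasurableSet[ℱ T] {ω | τ ω ≤ T} := by simpa using hτ T
    have := (ℱ.le T) _ this
    have : MeasurableSet ({ω | τ ω ≤ T}ᶜ) := this.compl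
    convert this using 1
    ext ω; simp [not_le]
  -- pointwise bound
  have hpt : ∀ ω, MeasureTheory.stoppedValue Z (fun ω => (τ ω : WithTop ℕ)) ω
      ≤ Set.indicator {ω | T < τ ω} (fun _ => (1 : ℝ)) ω := by
    intro ω
    rcases hτmem ω with h | h
    · have hZneg : Z (τ ω) ω < 0 := h.2.2
      have : ω ∉ {ω | T < τ ω} := by simp only [Set.mem_setOf_eq, not_lt]; exact h.2.1
      rw [Set.indicator_of_notMem this]
      exact le_of_lt hZneg
    · simp only [Set.mem_singleton_iff] at h
      have : ω ∈ {ω | T < τ ω} := by simp only [Set.mem_setOf_eq]; omega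
      rw [Set.indicator_of_mem this]
      exact (abs_le.mp (hbound (τ ω) ω)).2
  have hind : Integrable (Set.indicator {ω | T < τ ω} (fun _ => (1 : ℝ))) μP :=
    (integrable_const (1 : ℝ)).indicator hmeas
  calc (∫ ω, μ1 ω ∂μP) - (∫ ω, μ2 ω ∂μP)
      = ∫ ω, MeasureTheory.stoppedValue Z (fun ω => (τ ω : WithTop ℕ)) ω ∂μP := hc
    _ ≤ ∫ ω, Set.indicator {ω | T < τ ω} (fun _ => (1 : ℝ)) ω ∂μP :=
        integral_mono hint hind hpt
    _ = (μP {ω | T < τ ω}).toReal := by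
        rw [integral_indicator_const _ hmeas]; simp; rfl
end

section
/- Regret lower bound for greedy: under independent priors on μ₁, μ₂ ∈ [0,1], suppose α > 0 satisfies Pr[μ₁ ≥ 1 − 2α] ≤ (μ₁⁰ − μ₂⁰)/2, where μ₁⁰ = E[μ₁] > μ₂⁰ = E[μ₂]. Let E₁ be the event {μ₁ < 1 − 2α and greedy never chooses arm 2} and E₂ = {μ₂ > 1 − α}. If Pr[greedy never chooses arm 2] ≥ μ₁⁰ − μ₂⁰ and E₁ is independent of E₂, then the Bayesian regret of greedy over T rounds is at least T · α · (μ₁⁰ − μ₂⁰)/2 · Pr[μ₂ > 1 − α]. -/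
open scoped Classical

/-- Regret lower bound for greedy: under independent priors, if
`Pr[μ₁ ≥ 1−2α] ≤ (μ₁⁰−μ₂⁰)/2`, greedy never chooses arm 2 with probability at least
`μ₁⁰ − μ₂⁰` (in which case it plays arm 1 every round, earning `T·μ₁`), and the event
`E₁ = {μ₁ < 1−2α and never arm 2}` is independent of `E₂ = {μ₂ > 1−α}`, then the
Bayesian regret over `T` rounds is at least `T·α·(μ₁⁰−μ₂⁰)/2·Pr[μ₂ > 1−α]`. -/
theorem stmt12 {Ω : Type*} [Fintype Ω]
    (w : Ω → ℝ) (hw0 : ∀ ω, 0 ≤ w ω) (hw1 : ∑ ω, w ω = 1)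
    (μ1 μ2 : Ω → ℝ)
    (h1 : ∀ ω, μ1 ω ∈ Set.Icc (0:ℝ) 1) (h2 : ∀ ω, μ2 ω ∈ Set.Icc (0:ℝ) 1)
    (hpriorindep : ∀ x y : ℝ,
      pr w (fun ω => μ1 ω = x ∧ μ2 ω = y)
        = pr w (fun ω => μ1 ω = x) * pr w (fun ω => μ2 ω = y))
    (hmeans : ev w μ2 < ev w μ1)
    (T : ℕ) (α : ℝ) (hα : 0 < α)
    (hαsmall : pr w (fun ω => 1 - 2 * α ≤ μ1 ω) ≤ (ev w μ1 - ev w μ2) / 2)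
    (Never : Ω → Prop)
    (hNever : ev w μ1 - ev w μ2 ≤ pr w Never)
    (Rew : Ω → ℝ)
    (hRew1 : ∀ ω, Never ω → Rew ω = T * μ1 ω)
    (hRew2 : ∀ ω, Rew ω ≤ T * max (μ1 ω) (μ2 ω))
    (hindepE : pr w (fun ω => (μ1 ω < 1 - 2 * α ∧ Never ω) ∧ 1 - α < μ2 ω)
        = pr w (fun ω => μ1 ω < 1 - 2 * α ∧ Never ω) * pr w (fun ω => 1 - α < μ2 ω)) :
    T * α * ((ev w μ1 - ev w μ2) / 2) * pr w (fun ω => 1 - α < μ2 ω)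
      ≤ ev w (fun ω => T * max (μ1 ω) (μ2 ω) - Rew ω) := by

  classical
  set Δ := ev w μ1 - ev w μ2 with hΔ
  have hΔpos : 0 < Δ := by simp [hΔ]; linarith
  set E1 : Ω → Prop := fun ω => μ1 ω < 1 - 2 * α ∧ Never ω with hE1
  set p2 := pr w (fun ω => 1 - α < μ2 ω) with hp2
  have hp2nn : 0 ≤ p2 := Finset.sum_nonneg fun ω _ => by
    by_cases h : 1 - α < μ2 ω <;> simp [pr, h, hw0 ω]
  -- pr Never ≤ pr E1 + pr (1-2α ≤ μ1)
  have hsplit : pr w Never ≤ pr w E1 + pr w (fun ω => 1 - 2 * α ≤ μ1 ω) := by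
    rw [pr, pr, pr, ← Finset.sum_add_distrib]
    apply Finset.sum_le_sum
    intro ω _
    by_cases hn : Never ω
    · by_cases hm : μ1 ω < 1 - 2 * α
      · simp [hn, hm, hE1, not_lt.mp, le_of_lt]
        split <;> [linarith [hw0 ω]; linarith [hw0 ω]]
      · simp [hn, hm, hE1, not_lt.mp hm, hw0 ω]
    · simp [hn, hE1]
      split <;> [linarith [hw0 ω]; linarith [hw0 ω]]
  have hE1lb : Δ / 2 ≤ pr w E1 := by linarith
  have hTα : (0:ℝ) ≤ T * α := by positivity
  -- T*α*pr(E1∩E2) ≤ ev regret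
  have key : T * α * pr w (fun ω => E1 ω ∧ 1 - α < μ2 ω)
      ≤ ev w (fun ω => T * max (μ1 ω) (μ2 ω) - Rew ω) := by
    rw [pr, ev, Finset.mul_sum]
    apply Finset.sum_le_sum
    intro ω _
    by_cases h : E1 ω ∧ 1 - α < μ2 ω
    · rw [if_pos h]
      obtain ⟨⟨hμ1, hn⟩, hμ2⟩ := h
      have hmax : max (μ1 ω) (μ2 ω) = μ2 ω := max_eq_right (by linarith)
      rw [hRew1 ω hn, hmax]
      have : (T:ℝ) * α ≤ T * μ2 ω - T * μ1 ω := by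
        rw [← mul_sub]
        exact mul_le_mul_of_nonneg_left (by linarith) (Nat.cast_nonneg T)
      nlinarith [hw0 ω]
    · rw [if_neg h]
      have := hRew2 ω
      nlinarith [hw0 ω]
  have heq : pr w (fun ω => E1 ω ∧ 1 - α < μ2 ω) = pr w E1 * p2 := hindepE
  calc T * α * (Δ / 2) * p2 ≤ T * α * (pr w E1 * p2) := by
        nlinarith [mul_le_mul_of_nonneg_right (mul_le_mul_of_nonneg_left hE1lb hTα) hp2nn]
    _ = T * α * pr w (fun ω => E1 ω ∧ 1 - α < μ2 ω) := by rw [heq]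
    _ ≤ _ := key
end

section
/- Reward guarantee of RepeatedHP: suppose a sequence of T rounds is partitioned into exploration rounds (occurring independently with probability ε each round) and exploitation rounds, the expected reward of each exploitation round is at least the expected reward the exploration subroutine ALG would obtain in its next call, and N denotes the number of exploration rounds. Then the total expected reward of the combined process is at least (1/ε)·E[REW_ALG(N)], where REW_ALG(n) is ALG's total reward over its first n calls. -/
open scoped Classical

private lemma rank_sum (g : ℕ → ℝ) (S : Finset ℕ) :
    ∑ k ∈ Finset.Icc 1 S.card, g k
      = ∑ s ∈ S, g ((S.filter (fun x => x < s)).card + 1) := by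
  induction S using Finset.induction_on_max with
  | empty => simp
  | insert b s hb ih =>
    have hbs : b ∉ s := fun h => lt_irrefl b (hb b h)
    have h1 : ∀ a ∈ s, (insert b s).filter (fun x => x < a)
        = s.filter (fun x => x < a) := by
      intro a ha
      rw [Finset.filter_insert, if_neg (by have := hb a ha; omega)]
    have h2 : (insert b s).filter (fun x => x < b) = s := by
      rw [Finset.filter_insert, if_neg (lt_irrefl b), Finset.filter_true_of_mem hb]
    rw [Finset.sum_insert hbs, Finset.card_insert_of_notMem hbs,
        Finset.sum_Icc_succ_top (Nat.le_add_left 1 s.card), ih, h2, add_comm]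
    congr 1
    exact Finset.sum_congr rfl fun a ha => by rw [h1 a ha]

/-- Reward guarantee of RepeatedHP: rounds `1..T` are exploration rounds independently
with probability `ε` each (independently of the number `Nbef t` of previous exploration
rounds); exploration rounds earn in expectation exactly the reward `g (n+1)` of ALG's
next call, and exploitation rounds earn at least as much. Then the total expected reward
is at least `(1/ε)·E[REW_ALG(N)]`, `N` being the number of exploration rounds and
`REW_ALG(n) = ∑_{k=1}^n g k`. -/
theorem stmt18 {Ω : Type*} [Fintype Ω]
    (w : Ω → ℝ) (hw0 : ∀ ω, 0 ≤ w ω) (hw1 : ∑ ω, w ω = 1)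
    (T : ℕ) (ε : ℝ) (hε0 : 0 < ε) (hε1 : ε ≤ 1)
    (explore : ℕ → Ω → Prop) (r : ℕ → Ω → ℝ)
    (hr : ∀ t ω, r t ω ∈ Set.Icc (0:ℝ) 1)
    (g : ℕ → ℝ) (hg : ∀ k, g k ∈ Set.Icc (0:ℝ) 1)
    (Nbef : ℕ → Ω → ℕ)
    (hN : ∀ t ω, Nbef t ω = ((Finset.Icc 1 (t - 1)).filter (fun s => explore s ω)).card)
    (hcoin : ∀ t n, 1 ≤ t → t ≤ T →
      pr w (fun ω => explore t ω ∧ Nbef t ω = n) = ε * pr w (fun ω => Nbef t ω = n))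
    (hexplore : ∀ t n, 1 ≤ t → t ≤ T →
      ev w (fun ω => if explore t ω ∧ Nbef t ω = n then r t ω else 0)
        = g (n + 1) * pr w (fun ω => explore t ω ∧ Nbef t ω = n))
    (hexploit : ∀ t n, 1 ≤ t → t ≤ T →
      g (n + 1) * pr w (fun ω => ¬ explore t ω ∧ Nbef t ω = n)
        ≤ ev w (fun ω => if ¬ explore t ω ∧ Nbef t ω = n then r t ω else 0)) :
    (1 / ε) * ev w (fun ω => ∑ k ∈ Finset.Icc 1 (Nbef (T + 1) ω), g k)
      ≤ ev w (fun ω => ∑ t ∈ Finset.Icc 1 T, r t ω) := by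
  have hNmem : ∀ t ω, t ≤ T + 1 → Nbef t ω ∈ Finset.range (T + 1) := by
    intro t ω ht
    rw [Finset.mem_range, hN, Nat.lt_succ_iff]
    calc ((Finset.Icc 1 (t - 1)).filter (fun s => explore s ω)).card
        ≤ (Finset.Icc 1 (t - 1)).card := Finset.card_filter_le _ _
      _ ≤ T := by rw [Nat.card_Icc]; omega
  -- Step A: rewrite the ALG-reward as a sum over rounds
  have key : ∀ ω, ∑ k ∈ Finset.Icc 1 (Nbef (T + 1) ω), g k
      = ∑ t ∈ Finset.Icc 1 T, (if explore t ω then g (Nbef t ω + 1) else 0) := by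
    intro ω
    have h1 : Nbef (T + 1) ω
        = ((Finset.Icc 1 T).filter (fun s => explore s ω)).card := by
      rw [hN]; simp
    rw [h1, rank_sum, Finset.sum_filter]
    refine Finset.sum_congr rfl fun t ht => ?_
    simp only [Finset.mem_Icc] at ht
    by_cases he : explore t ω
    · simp only [he, if_true]
      have hset : ((Finset.Icc 1 T).filter (fun s => explore s ω)).filter (fun x => x < t)
          = (Finset.Icc 1 (t - 1)).filter (fun s => explore s ω) := by
        ext s
        simp only [Finset.filter_filter, Finset.mem_filter, Finset.mem_Icc]
        constructor
        · rintro ⟨⟨hs1, hs2⟩, hs3, hs4⟩; exact ⟨⟨hs1, by omega⟩, hs3⟩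
        · rintro ⟨⟨hs1, hs2⟩, hs3⟩; exact ⟨⟨hs1, by omega⟩, hs3, by omega⟩
      rw [hset, ← hN]
    · simp [he]
  -- per-round expansion over possible values of Nbef
  have expand : ∀ t ∈ Finset.Icc 1 T, ∀ ω : Ω,
      (if explore t ω then g (Nbef t ω + 1) else 0)
        = ∑ n ∈ Finset.range (T + 1),
            (if explore t ω ∧ Nbef t ω = n then g (n + 1) else 0) := by
    intro t ht ω
    have hm := hNmem t ω (by simp only [Finset.mem_Icc] at ht; omega)
    by_cases he : explore t ω
    · simp [he, Finset.sum_ite_eq, hm]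
    · simp [he]
  -- Step B : compute the LHS
  have hLHS : ev w (fun ω => ∑ k ∈ Finset.Icc 1 (Nbef (T + 1) ω), g k)
      = ε * ∑ t ∈ Finset.Icc 1 T, ∑ n ∈ Finset.range (T + 1),
          g (n + 1) * pr w (fun ω => Nbef t ω = n) := by
    unfold ev
    calc ∑ ω, w ω * ∑ k ∈ Finset.Icc 1 (Nbef (T + 1) ω), g k
        = ∑ ω, ∑ t ∈ Finset.Icc 1 T, ∑ n ∈ Finset.range (T + 1),
            w ω * (if explore t ω ∧ Nbef t ω = n then g (n + 1) else 0) := by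
          refine Finset.sum_congr rfl fun ω _ => ?_
          rw [key ω, Finset.mul_sum]
          refine Finset.sum_congr rfl fun t ht => ?_
          rw [expand t ht ω, Finset.mul_sum]
      _ = ∑ t ∈ Finset.Icc 1 T, ∑ n ∈ Finset.range (T + 1),
            g (n + 1) * pr w (fun ω => explore t ω ∧ Nbef t ω = n) := by
          rw [Finset.sum_comm]
          refine Finset.sum_congr rfl fun t _ => ?_
          rw [Finset.sum_comm]
          refine Finset.sum_congr rfl fun n _ => ?_
          unfold pr
          rw [Finset.mul_sum]
          refine Finset.sum_congr rfl fun ω _ => ?_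
          by_cases h : explore t ω ∧ Nbef t ω = n <;> simp [h, mul_comm]
      _ = ε * ∑ t ∈ Finset.Icc 1 T, ∑ n ∈ Finset.range (T + 1),
            g (n + 1) * pr w (fun ω => Nbef t ω = n) := by
          rw [Finset.mul_sum]
          refine Finset.sum_congr rfl fun t ht => ?_
          rw [Finset.mul_sum]
          refine Finset.sum_congr rfl fun n _ => ?_
          simp only [Finset.mem_Icc] at ht
          rw [hcoin t n ht.1 ht.2]
          ring
  rw [hLHS, one_div, inv_mul_cancel_left₀ (ne_of_gt hε0)]
  -- Step C : bound the RHS from below round by round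
  have hsplit : ∀ t n, pr w (fun ω => Nbef t ω = n)
      = pr w (fun ω => explore t ω ∧ Nbef t ω = n)
        + pr w (fun ω => ¬ explore t ω ∧ Nbef t ω = n) := by
    intro t n
    unfold pr
    rw [← Finset.sum_add_distrib]
    refine Finset.sum_congr rfl fun ω _ => ?_
    by_cases h1 : explore t ω <;> by_cases h2 : Nbef t ω = n <;> simp [h1, h2]
  have hEVr : ∀ t ∈ Finset.Icc 1 T,
      ∑ n ∈ Finset.range (T + 1), g (n + 1) * pr w (fun ω => Nbef t ω = n)
        ≤ ev w (fun ω => r t ω) := by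
    intro t ht
    obtain ⟨ht1, ht2⟩ := Finset.mem_Icc.mp ht
    have hdecomp : ev w (fun ω => r t ω)
        = ∑ n ∈ Finset.range (T + 1),
            (ev w (fun ω => if explore t ω ∧ Nbef t ω = n then r t ω else 0)
             + ev w (fun ω => if ¬ explore t ω ∧ Nbef t ω = n then r t ω else 0)) := by
      unfold ev
      have hpt : ∀ ω : Ω, ∑ n ∈ Finset.range (T + 1),
          ((if explore t ω ∧ Nbef t ω = n then r t ω else 0)
            + (if ¬ explore t ω ∧ Nbef t ω = n then r t ω else 0)) = r t ω := by
        intro ω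
        have hm := hNmem t ω (by omega)
        by_cases he : explore t ω <;> simp [he, Finset.sum_ite_eq, hm]
      calc ∑ ω, w ω * r t ω
          = ∑ ω, ∑ n ∈ Finset.range (T + 1),
              (w ω * (if explore t ω ∧ Nbef t ω = n then r t ω else 0)
               + w ω * (if ¬ explore t ω ∧ Nbef t ω = n then r t ω else 0)) := by
            refine Finset.sum_congr rfl fun ω _ => ?_
            conv_lhs => rw [← hpt ω]
            rw [Finset.mul_sum]
            exact Finset.sum_congr rfl fun n _ => by ring
        _ = _ := by
            rw [Finset.sum_comm]
            exact Finset.sum_congr rfl fun n _ => by rw [Finset.sum_add_distrib]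
    rw [hdecomp]
    refine Finset.sum_le_sum fun n _ => ?_
    rw [hsplit t n, mul_add, ← hexplore t n ht1 ht2]
    exact add_le_add_right (hexploit t n ht1 ht2) _
  calc ∑ t ∈ Finset.Icc 1 T, ∑ n ∈ Finset.range (T + 1),
        g (n + 1) * pr w (fun ω => Nbef t ω = n)
      ≤ ∑ t ∈ Finset.Icc 1 T, ev w (fun ω => r t ω) := Finset.sum_le_sum hEVr
    _ = ev w (fun ω => ∑ t ∈ Finset.Icc 1 T, r t ω) := by
        unfold ev
        rw [Finset.sum_comm]
        exact Finset.sum_congr rfl fun ω _ => (Finset.mul_sum _ _ _).symm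
end
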